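/- arXiv:1807.11217 — 3 statements merged into one kernel-verified Lean document; each statement's English description precedes it below -/
import Mathlib

section
/- Let f(x) = ax/(x²+a) over ℚ_p with a ≠ 0, A = |a|_p, and c ∈ S_r(0) with r² < A. If V_θ(c) ⊆ S_r(0) is a ball invariant under f (f(V_θ(c)) ⊆ V_θ(c)), then θ ≥ r³/A. -/
/-! The centre `c` lies in the invariant ball, so `f c` does too, i.e. `‖f c - c‖ ≤ θ`.
Since `f c - c = -c³ / (c² + a)` and `‖c²‖ < ‖a‖`, the ultrametric inequality gives
`‖c² + a‖ = ‖a‖`, hence `‖f c - c‖ = r³ / ‖a‖`. -/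

lemma mul_div_sq_add_sub_self {K : Type*} [Field K] {a c : K} (h : c ^ 2 + a ≠ 0) :
    a * c / (c ^ 2 + a) - c = -c ^ 3 / (c ^ 2 + a) := by
  field_simp
  ring

section Ultrametric

variable {K : Type*} [NormedField K] [IsUltrametricDist K] {a c : K}

lemma norm_sq_add_of_norm_sq_lt (h : ‖c‖ ^ 2 < ‖a‖) : ‖c ^ 2 + a‖ = ‖a‖ := by
  rw [← norm_pow] at h
  rw [IsUltrametricDist.norm_add_eq_max_of_norm_ne_norm h.ne, max_eq_right h.le]

lemma norm_mul_div_sq_add_sub_self (h : ‖c‖ ^ 2 < ‖a‖) :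
    ‖a * c / (c ^ 2 + a) - c‖ = ‖c‖ ^ 3 / ‖a‖ := by
  have hden := norm_sq_add_of_norm_sq_lt h
  have hden0 : c ^ 2 + a ≠ 0 := by
    rw [← norm_ne_zero_iff, hden]
    exact (h.trans_le' (by positivity)).ne'
  rw [mul_div_sq_add_sub_self hden0, norm_div, norm_neg, norm_pow, hden]

end Ultrametric

theorem stmt13_general (p : ℕ) [Fact p.Prime] (a : ℚ_[p]) (r θ : ℝ)
    (hrA : r ^ 2 < ‖a‖) (hθ : 0 ≤ θ)
    (c : ℚ_[p]) (hc : ‖c‖ = r)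
    (hinv : ∀ x : ℚ_[p], ‖x - c‖ ≤ θ → ‖a * x / (x ^ 2 + a) - c‖ ≤ θ) :
    r ^ 3 / ‖a‖ ≤ θ := by
  have hfc := hinv c (by simpa using hθ)
  rwa [norm_mul_div_sq_add_sub_self (hc ▸ hrA), hc] at hfc

/-- если V_θ(c) ⊆ S_r(0) is invariant under f then θ ≥ r³/A. -/
theorem stmt13 (p : ℕ) [Fact p.Prime] (a : ℚ_[p]) (ha : a ≠ 0) (r θ : ℝ)
    (hr : 0 < r) (hrA : r ^ 2 < ‖a‖) (hθ : 0 ≤ θ)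
    (c : ℚ_[p]) (hc : ‖c‖ = r)
    (hsub : ∀ x : ℚ_[p], ‖x - c‖ ≤ θ → ‖x‖ = r)
    (hinv : ∀ x : ℚ_[p], ‖x - c‖ ≤ θ → ‖a * x / (x ^ 2 + a) - c‖ ≤ θ) :
    r ^ 3 / ‖a‖ ≤ θ :=
  stmt13_general p a r θ hrA hθ c hc hinv
end

section
/- Let p = 2, f(x) = ax/(x²+a) over ℚ₂ (or ℂ₂) with a ≠ 0, A = |a|₂, and t₁ = √(−2a), t₂ = −t₁ (assuming they exist). Then |t₁|₂ = |t₂|₂ = √(A/2), |t₂ − t₁|₂ = √A/(2√2), and for any 0 < r ≤ √A/(2√2) and any x with |x − t₁|₂ = r (all iterates defined), one has |f(x) − t₂|₂ = r; symmetrically |x − t₂|₂ = r implies |f(x) − t₁|₂ = r. Thus f swaps the spheres S_r(t₁) and S_r(t₂). -/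
/-!
For `f x = a x / (x² + a)` one has the identity
`f x - f y = a (x - y) (a - x y) / ((x² + a) (y² + a))`. In an ultrametric field, on the ball
`‖x‖² < ‖a‖` each of `a - x y`, `x² + a`, `y² + a` has norm `‖a‖`, so `f` is an isometry there.
When `t² = -2a` and `‖2‖ < 1`, the point `t` lies in that ball, `f t = -t`, and every `x` with
`‖x - t‖ < ‖t‖` has `‖x‖ = ‖t‖`; hence `‖f x + t‖ = ‖f x - f t‖ = ‖x - t‖`.
Over `ℚ₂`, `‖t₂ - t₁‖ = ‖2 t‖ = ‖t‖ / 2 < ‖t‖`.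
-/

namespace IsUltrametricDist

variable {S : Type*} [SeminormedAddGroup S] [IsUltrametricDist S]

lemma norm_add_eq_left_of_norm_lt {x y : S} (h : ‖y‖ < ‖x‖) : ‖x + y‖ = ‖x‖ := by
  rw [norm_add_eq_max_of_norm_ne_norm h.ne', max_eq_left h.le]

lemma norm_sub_eq_left_of_norm_lt {x y : S} (h : ‖y‖ < ‖x‖) : ‖x - y‖ = ‖x‖ := by
  rw [sub_eq_add_neg]
  exact norm_add_eq_left_of_norm_lt (by rwa [norm_neg])

lemma norm_eq_of_norm_sub_lt {x y : S} (h : ‖x - y‖ < ‖y‖) : ‖x‖ = ‖y‖ := by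
  simpa [max_eq_right h.le] using norm_add_eq_max_of_norm_ne_norm h.ne

end IsUltrametricDist

open IsUltrametricDist

section QuadraticMap

variable {K : Type*} [NormedField K]

lemma div_sq_add_sub_div_sq_add {a x y : K} (hx : x ^ 2 + a ≠ 0) (hy : y ^ 2 + a ≠ 0) :
    a * x / (x ^ 2 + a) - a * y / (y ^ 2 + a) =
      a * (x - y) * (a - x * y) / ((x ^ 2 + a) * (y ^ 2 + a)) := by
  rw [div_sub_div _ _ hx hy]
  ring

lemma mul_div_sq_add_eq_neg {a t : K} (ha : a ≠ 0) (ht : t ^ 2 = -(2 * a)) :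
    a * t / (t ^ 2 + a) = -t := by
  rw [ht, show -(2 * a) + a = -a by ring, div_neg, mul_div_cancel_left₀ t ha]

variable [IsUltrametricDist K]

lemma norm_sq_add_eq {a x : K} (hx : ‖x‖ ^ 2 < ‖a‖) : ‖x ^ 2 + a‖ = ‖a‖ := by
  rw [add_comm]
  exact norm_add_eq_left_of_norm_lt (by rwa [norm_pow])

theorem norm_div_sq_add_sub_div_sq_add {a x y : K} (hx : ‖x‖ ^ 2 < ‖a‖) (hy : ‖y‖ ^ 2 < ‖a‖) :
    ‖a * x / (x ^ 2 + a) - a * y / (y ^ 2 + a)‖ = ‖x - y‖ := by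
  have ha : ‖a‖ ≠ 0 := (lt_of_le_of_lt (by positivity) hx).ne'
  have hxy : ‖x * y‖ < ‖a‖ := by
    rw [norm_mul]
    nlinarith [norm_nonneg x, norm_nonneg y, sq_nonneg (‖x‖ - ‖y‖)]
  have hx0 : x ^ 2 + a ≠ 0 := norm_ne_zero_iff.1 (by rwa [norm_sq_add_eq hx])
  have hy0 : y ^ 2 + a ≠ 0 := norm_ne_zero_iff.1 (by rwa [norm_sq_add_eq hy])
  rw [div_sq_add_sub_div_sq_add hx0 hy0, norm_div, norm_mul, norm_mul, norm_mul,
    norm_sq_add_eq hx, norm_sq_add_eq hy, norm_sub_eq_left_of_norm_lt hxy]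
  field_simp

theorem norm_div_sq_add_add_eq_norm_sub {a t x : K} (h2 : ‖(2 : K)‖ < 1) (ha : a ≠ 0)
    (ht : t ^ 2 = -(2 * a)) (hx : ‖x - t‖ < ‖t‖) :
    ‖a * x / (x ^ 2 + a) + t‖ = ‖x - t‖ := by
  have hta : ‖t‖ ^ 2 < ‖a‖ := by
    rw [← norm_pow, ht, norm_neg, norm_mul]
    exact mul_lt_of_lt_one_left (norm_pos_iff.2 ha) h2
  have hxa : ‖x‖ ^ 2 < ‖a‖ := by rwa [norm_eq_of_norm_sub_lt hx]
  calc ‖a * x / (x ^ 2 + a) + t‖ = ‖a * x / (x ^ 2 + a) - a * t / (t ^ 2 + a)‖ := by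
        rw [mul_div_sq_add_eq_neg ha ht, sub_neg_eq_add]
    _ = ‖x - t‖ := norm_div_sq_add_sub_div_sq_add hxa hta

end QuadraticMap

/-- Case p = 2. With t₁ = t = √(−2a), t₂ = −t, we have
|t₁|₂ = |t₂|₂ = √(A/2), |t₂ − t₁|₂ = √A/(2√2), and for 0 < r ≤ √A/(2√2),
f swaps the spheres S_r(t₁) and S_r(t₂). -/
theorem stmt18 (a : ℚ_[2]) (ha : a ≠ 0) (t : ℚ_[2]) (ht : t ^ 2 = -(2 * a)) :
    ‖t‖ = Real.sqrt (‖a‖ / 2) ∧ ‖-t‖ = Real.sqrt (‖a‖ / 2) ∧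
    ‖(-t) - t‖ = Real.sqrt ‖a‖ / (2 * Real.sqrt 2) ∧
    ∀ r : ℝ, 0 < r → r ≤ Real.sqrt ‖a‖ / (2 * Real.sqrt 2) →
      ∀ x : ℚ_[2],
        (‖x - t‖ = r → ‖a * x / (x ^ 2 + a) - (-t)‖ = r) ∧
        (‖x - (-t)‖ = r → ‖a * x / (x ^ 2 + a) - t‖ = r) := by
  have h2 : ‖(2 : ℚ_[2])‖ = 2⁻¹ := by simpa using Padic.norm_p (p := 2)
  have hnorm_t : ‖t‖ = Real.sqrt (‖a‖ / 2) := by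
    rw [← Real.sqrt_sq (norm_nonneg t), ← norm_pow, ht, norm_neg, norm_mul, h2, inv_mul_eq_div]
  have hgap : Real.sqrt ‖a‖ / (2 * Real.sqrt 2) = ‖t‖ / 2 := by
    rw [hnorm_t, Real.sqrt_div (norm_nonneg a)]
    ring
  have ht0 : 0 < ‖t‖ := by rw [hnorm_t]; exact Real.sqrt_pos.2 (by positivity)
  have h2lt : ‖(2 : ℚ_[2])‖ < 1 := by rw [h2]; norm_num
  refine ⟨hnorm_t, by rwa [norm_neg], ?_, fun r _ hr x => ⟨fun hx => ?_, fun hx => ?_⟩⟩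
  · rw [hgap, show -t - t = -(2 * t) by ring, norm_neg, norm_mul, h2]
    ring
  · rw [sub_neg_eq_add, ← hx]
    exact norm_div_sq_add_add_eq_norm_sub h2lt ha ht (by linarith)
  · rw [sub_eq_add_neg, ← hx]
    exact norm_div_sq_add_add_eq_norm_sub h2lt ha ((neg_sq t).trans ht)
      (by rw [norm_neg]; linarith)
end

section
/- Let p = 3, f(x) = ax/(x²+a) over ℚ₃ (or ℂ₃) with a ≠ 0, A = |a|₃, and t₁ = √(−2a), t₂ = −t₁ 2-periodic points of f (assuming they exist), with |t₁|₃ = |t₂|₃ = |t₂−t₁|₃ = √A. Then for any r < √A and any x with |x − t₁|₃ = r (whose orbit avoids the poles), the even iterates converge to t₁ and the odd iterates converge to t₂: lim_{n→∞} f^{2n}(x) = t₁ and lim_{n→∞} f^{2n+1}(x) = t₂. In particular, |f(x) − t₂|₃ ≤ max(r²/√A, r/3) < r whenever 0 < r < √A. -/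
/-!
Put `u = x - t`. Because `t² = -2a`, one has `f x + t = u (t u - 3a) / (x² + a)`, and for
`|u| < √A` the ultrametric inequality gives `|x² + a| = A`. Hence
`|f x + t| ≤ |u| · max (|u| / √A, |3|)`: the map `f` sends the disc of radius `r < √A` around
`t` into the disc of radius `c r` around `-t`, with `c = max (r / √A, 1/3) < 1`. Since `-t`
satisfies the same equation, iterating gives `|fⁿ x - (-1)ⁿ t| ≤ cⁿ r`.
-/

open Filter Topology

lemma Padic.norm_two_eq_one {p : ℕ} [hp : Fact p.Prime] (hp2 : p ≠ 2) : ‖(2 : ℚ_[p])‖ = 1 := by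
  exact_mod_cast Padic.norm_natCast_eq_one_iff.mpr
    ((Nat.coprime_primes hp.out Nat.prime_two).mpr hp2)

lemma tendsto_of_norm_sub_le_geometric {E : Type*} [SeminormedAddCommGroup E] {u : ℕ → E}
    {b : E} {c C : ℝ} (hc₀ : 0 ≤ c) (hc₁ : c < 1) (h : ∀ n, ‖u n - b‖ ≤ c ^ n * C) :
    Tendsto u atTop (𝓝 b) := by
  rw [tendsto_iff_norm_sub_tendsto_zero]
  refine squeeze_zero (fun _ => norm_nonneg _) h ?_
  simpa using (tendsto_pow_atTop_nhds_zero_of_lt_one hc₀ hc₁).mul_const C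

section RationalMap

variable {K : Type*} [NormedField K]

def rationalMap (a : K) (y : K) : K := a * y / (y ^ 2 + a)

variable {a t x : K}

lemma norm_eq_sqrt_of_sq_eq_neg_two_mul (h2 : ‖(2 : K)‖ = 1) (ht : t ^ 2 = -(2 * a)) :
    ‖t‖ = √‖a‖ := by
  rw [← Real.sqrt_sq (norm_nonneg t), ← norm_pow, ht, norm_neg, norm_mul, h2, one_mul]

lemma rationalMap_sub_neg_eq (ht : t ^ 2 = -(2 * a)) (hx : x ^ 2 + a ≠ 0) :
    rationalMap a x - -t = (x - t) * (t * (x - t) - 3 * a) / (x ^ 2 + a) := by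
  unfold rationalMap
  field_simp
  linear_combination (2 * x - t) * ht

variable [IsUltrametricDist K]

lemma norm_sq_add_eq_of_norm_sub_lt (h2 : ‖(2 : K)‖ = 1) (ht : t ^ 2 = -(2 * a))
    (hx : ‖x - t‖ < √‖a‖) :
    ‖x ^ 2 + a‖ = ‖a‖ := by
  set u := x - t
  set s := √‖a‖
  have hs : s * s = ‖a‖ := Real.mul_self_sqrt (norm_nonneg a)
  have hsmall : ‖u ^ 2 + 2 * t * u‖ < ‖a‖ := by
    refine (IsUltrametricDist.norm_add_le_max _ _).trans_lt (max_lt ?_ ?_)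
    · rw [norm_pow, sq, ← hs]
      exact mul_self_lt_mul_self (norm_nonneg u) hx
    · rw [norm_mul, norm_mul, h2, one_mul, ← hs, norm_eq_sqrt_of_sq_eq_neg_two_mul h2 ht]
      exact mul_lt_mul_of_pos_left hx ((norm_nonneg u).trans_lt hx)
  have hsplit : x ^ 2 + a = (u ^ 2 + 2 * t * u) + -a := by
    simp only [u]; linear_combination ht
  rw [hsplit,
    IsUltrametricDist.norm_add_eq_max_of_norm_ne_norm (by rw [norm_neg]; exact hsmall.ne), norm_neg,
    max_eq_right hsmall.le]

lemma norm_rationalMap_sub_neg_le (h2 : ‖(2 : K)‖ = 1) (ht : t ^ 2 = -(2 * a))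
    (hx : ‖x - t‖ < √‖a‖) :
    ‖rationalMap a x - -t‖ ≤ ‖x - t‖ * max (‖x - t‖ / √‖a‖) ‖(3 : K)‖ := by
  have hs₀ : 0 < √‖a‖ := (norm_nonneg _).trans_lt hx
  have ha : 0 < ‖a‖ := Real.sqrt_pos.mp hs₀
  have hden := norm_sq_add_eq_of_norm_sub_lt h2 ht hx
  have hfactor : ‖t * (x - t) - 3 * a‖ ≤ max (√‖a‖ * ‖x - t‖) (‖(3 : K)‖ * ‖a‖) := by
    rw [sub_eq_add_neg, ← norm_eq_sqrt_of_sq_eq_neg_two_mul h2 ht, ← norm_mul, ← norm_mul,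
      ← norm_neg (3 * a)]
    exact IsUltrametricDist.norm_add_le_max _ _
  rw [rationalMap_sub_neg_eq ht (norm_pos_iff.mp (hden ▸ ha)), norm_div, norm_mul, hden,
    div_le_iff₀ ha, mul_assoc]
  refine mul_le_mul_of_nonneg_left (hfactor.trans_eq ?_) (norm_nonneg _)
  rw [max_mul_of_nonneg _ _ ha.le, div_mul_eq_mul_div, mul_comm ‖(3 : K)‖]
  congr 1
  rw [eq_div_iff hs₀.ne', mul_right_comm, Real.mul_self_sqrt (norm_nonneg a), mul_comm]

lemma norm_iterate_rationalMap_sub_le (h2 : ‖(2 : K)‖ = 1) {r : ℝ} (hr : r < √‖a‖) (n : ℕ) :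
    ∀ {t y : K}, t ^ 2 = -(2 * a) → ‖y - t‖ ≤ r →
      ‖(rationalMap a)^[n] y - (-1) ^ n * t‖ ≤ max (r / √‖a‖) ‖(3 : K)‖ ^ n * ‖y - t‖ := by
  set c := max (r / √‖a‖) ‖(3 : K)‖
  induction n with
  | zero => simp
  | succ n ih =>
    intro t y ht hy
    have hc : c ≤ 1 :=
      max_le ((div_le_one ((norm_nonneg _).trans_lt (hy.trans_lt hr))).mpr hr.le)
      (by exact_mod_cast IsUltrametricDist.norm_natCast_le_one K 3)
    have hstep : ‖rationalMap a y - -t‖ ≤ c * ‖y - t‖ :=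
      (norm_rationalMap_sub_neg_le h2 ht (hy.trans_lt hr)).trans_eq (mul_comm _ _) |>.trans
        (by gcongr; exact max_le_max (by gcongr) le_rfl)
    have ih' := ih (t := -t) (y := rationalMap a y) (by rw [neg_sq, ht])
      ((hstep.trans (mul_le_of_le_one_left (norm_nonneg _) hc)).trans hy)
    rw [Function.iterate_succ_apply, show (-1 : K) ^ (n + 1) * t = (-1) ^ n * -t by ring]
    calc _ ≤ c ^ n * ‖rationalMap a y - -t‖ := ih'
      _ ≤ c ^ n * (c * ‖y - t‖) := by gcongr
      _ = c ^ (n + 1) * ‖y - t‖ := by ring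

end RationalMap

theorem stmt19_general (a : ℚ_[3]) (t : ℚ_[3]) (ht : t ^ 2 = -(2 * a)) :
    ‖t‖ = Real.sqrt ‖a‖ ∧ ‖(-t) - t‖ = Real.sqrt ‖a‖ ∧
    ∀ r : ℝ, 0 < r → r < Real.sqrt ‖a‖ →
      ∀ x : ℚ_[3],
        (∀ n : ℕ, ((fun y : ℚ_[3] => a * y / (y ^ 2 + a))^[n] x) ^ 2 + a ≠ 0) →
        ‖x - t‖ = r →
        Filter.Tendsto (fun n : ℕ => (fun y : ℚ_[3] => a * y / (y ^ 2 + a))^[2 * n] x)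
          Filter.atTop (nhds t) ∧
        Filter.Tendsto (fun n : ℕ => (fun y : ℚ_[3] => a * y / (y ^ 2 + a))^[2 * n + 1] x)
          Filter.atTop (nhds (-t)) ∧
        ‖a * x / (x ^ 2 + a) - (-t)‖ ≤ max (r ^ 2 / Real.sqrt ‖a‖) (r / 3) ∧
        ‖a * x / (x ^ 2 + a) - (-t)‖ < r := by
  have h2 : ‖(2 : ℚ_[3])‖ = 1 := Padic.norm_two_eq_one (by norm_num)
  have h3 : ‖(3 : ℚ_[3])‖ = 3⁻¹ := by exact_mod_cast Padic.norm_p (p := 3)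
  have hnorm := norm_eq_sqrt_of_sq_eq_neg_two_mul h2 ht
  refine ⟨hnorm, by rw [← neg_add', ← two_mul, norm_neg, norm_mul, h2, one_mul, hnorm], ?_⟩
  intro r hr₀ hr x _ hx
  set c := max (r / √‖a‖) ‖(3 : ℚ_[3])‖
  have hc₀ : 0 ≤ c := le_max_of_le_right (norm_nonneg _)
  have hc₁ : c < 1 := max_lt ((div_lt_one (hr₀.trans hr)).mpr hr) (by rw [h3]; norm_num)
  have hc₂ : c ^ 2 < 1 := pow_lt_one₀ hc₀ hc₁ two_ne_zero
  have hiter (n : ℕ) : ‖(rationalMap a)^[n] x - (-1) ^ n * t‖ ≤ c ^ n * r :=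
    hx ▸ norm_iterate_rationalMap_sub_le h2 hr n ht hx.le
  have hstep : ‖rationalMap a x - -t‖ ≤ r * c := by
    have := norm_rationalMap_sub_neg_le h2 ht (hx.trans_lt hr)
    rwa [hx] at this
  refine ⟨tendsto_of_norm_sub_le_geometric (C := r) (sq_nonneg c) hc₂ fun n => ?_,
    tendsto_of_norm_sub_le_geometric (C := c * r) (sq_nonneg c) hc₂ fun n => ?_,
    hstep.trans_eq ?_, hstep.trans_lt (mul_lt_of_lt_one_right hr₀ hc₁)⟩
  · have := hiter (2 * n)
    rwa [Even.neg_one_pow ⟨n, two_mul n⟩, one_mul, pow_mul] at this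
  · have := hiter (2 * n + 1)
    rwa [Odd.neg_one_pow ⟨n, rfl⟩, neg_one_mul, pow_succ, pow_mul, mul_assoc] at this
  · rw [mul_max_of_nonneg _ _ hr₀.le, h3]
    congr 1; ring

/-- Case p = 3. With 2-periodic points t₁ = t = √(−2a), t₂ = −t of
norm √A, for any starting point x with |x − t₁|₃ = r < √A whose orbit avoids the
poles, even iterates tend to t₁ and odd iterates tend to t₂; in particular
|f(x) − t₂|₃ ≤ max(r²/√A, r/3) < r. -/
theorem stmt19 (a : ℚ_[3]) (ha : a ≠ 0) (t : ℚ_[3]) (ht : t ^ 2 = -(2 * a)) :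
    ‖t‖ = Real.sqrt ‖a‖ ∧ ‖(-t) - t‖ = Real.sqrt ‖a‖ ∧
    ∀ r : ℝ, 0 < r → r < Real.sqrt ‖a‖ →
      ∀ x : ℚ_[3],
        (∀ n : ℕ, ((fun y : ℚ_[3] => a * y / (y ^ 2 + a))^[n] x) ^ 2 + a ≠ 0) →
        ‖x - t‖ = r →
        Filter.Tendsto (fun n : ℕ => (fun y : ℚ_[3] => a * y / (y ^ 2 + a))^[2 * n] x)
          Filter.atTop (nhds t) ∧
        Filter.Tendsto (fun n : ℕ => (fun y : ℚ_[3] => a * y / (y ^ 2 + a))^[2 * n + 1] x)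
          Filter.atTop (nhds (-t)) ∧
        ‖a * x / (x ^ 2 + a) - (-t)‖ ≤ max (r ^ 2 / Real.sqrt ‖a‖) (r / 3) ∧
        ‖a * x / (x ^ 2 + a) - (-t)‖ < r :=
  stmt19_general a t ht
end
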